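/- Let μ, μ_m be non-atomic Borel probability measures on [0,1] with distribution functions F(x) = μ([0,x]) and F_m(x) = μ_m([0,x]). Then for all x ∈ [0,1] and all n ≥ 1: |q_{2n}(x) − q_{2n,m}(x)| ≤ 2 ‖F − F_m‖_∞ x^n / (n−1)!, |p_{2n}(x) − p_{2n,m}(x)| ≤ 2 ‖F − F_m‖_∞ x^n / (n−1)!, |q_{2n+1}(x) − q_{2n+1,m}(x)| ≤ 2 ‖F − F_m‖_∞ x^n / (n−1)!, and |p_{2n+1}(x) − p_{2n+1,m}(x)| ≤ 2 ‖F − F_m‖_∞ x^n / (n−1)!, where ‖·‖_∞ denotes the supremum norm on [0,1]. -/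

import Mathlib

open MeasureTheory Real Filter

/-- Iterated integrals `p_n` w.r.t. a measure `ν`: `p_0 = 1`,
`p_n(x) = ∫_0^x p_{n-1} dν` if `n` odd, `p_n(x) = ∫_0^x p_{n-1} dt` if `n` even. -/
noncomputable def pIter (ν : Measure ℝ) : ℕ → ℝ → ℝ
  | 0 => fun _ => 1
  | (n+1) => fun x =>
      if Odd (n+1) then ∫ t in Set.Ioc (0:ℝ) x, pIter ν n t ∂ν
      else ∫ t in Set.Ioc (0:ℝ) x, pIter ν n t

/-- Iterated integrals `q_n` w.r.t. a measure `ν`: `q_0 = 1`,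
`q_n(x) = ∫_0^x q_{n-1} dt` if `n` odd, `q_n(x) = ∫_0^x q_{n-1} dν` if `n` even. -/
noncomputable def qIter (ν : Measure ℝ) : ℕ → ℝ → ℝ
  | 0 => fun _ => 1
  | (n+1) => fun x =>
      if Odd (n+1) then ∫ t in Set.Ioc (0:ℝ) x, qIter ν n t
      else ∫ t in Set.Ioc (0:ℝ) x, qIter ν n t ∂ν

noncomputable def spF (ν : Measure ℝ) (z x : ℝ) : ℝ :=
  ∑' n : ℕ, (-1)^n * z^(2*n+1) * pIter ν (2*n+1) x

noncomputable def sqF (ν : Measure ℝ) (z x : ℝ) : ℝ :=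
  ∑' n : ℕ, (-1)^n * z^(2*n+1) * qIter ν (2*n+1) x

noncomputable def cpF (ν : Measure ℝ) (z x : ℝ) : ℝ :=
  ∑' n : ℕ, (-1)^n * z^(2*n) * pIter ν (2*n) x

noncomputable def cqF (ν : Measure ℝ) (z x : ℝ) : ℝ :=
  ∑' n : ℕ, (-1)^n * z^(2*n) * qIter ν (2*n) x

noncomputable def sinpF (ν : Measure ℝ) (z : ℝ) : ℝ := spF ν z 1
noncomputable def sinqF (ν : Measure ℝ) (z : ℝ) : ℝ := sqF ν z 1
noncomputable def cospF (ν : Measure ℝ) (z : ℝ) : ℝ := cpF ν z 1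
noncomputable def cosqF (ν : Measure ℝ) (z : ℝ) : ℝ := cqF ν z 1

/-- distribution function `F(x) = ν [0,x]` -/
noncomputable def distF (ν : Measure ℝ) (x : ℝ) : ℝ := (ν (Set.Icc 0 x)).toReal

/-- supremum distance of two functions over `[0,1]` -/
noncomputable def supDist (f g : ℝ → ℝ) : ℝ := ⨆ x : Set.Icc (0:ℝ) 1, |f x.1 - g x.1|

section Aux

variable {ν : Measure ℝ}

lemma pIter_odd_eq (ν : Measure ℝ) (k : ℕ) (x : ℝ) :
    pIter ν (2*k+1) x = ∫ t in Set.Ioc (0:ℝ) x, pIter ν (2*k) t ∂ν := by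
  show pIter ν (2*k+1) x = _
  rw [pIter]
  beta_reduce
  rw [if_pos ⟨k, by ring⟩]

lemma pIter_even_eq (ν : Measure ℝ) (k : ℕ) (x : ℝ) :
    pIter ν (2*k+2) x = ∫ t in Set.Ioc (0:ℝ) x, pIter ν (2*k+1) t := by
  show pIter ν ((2*k+1)+1) x = _
  rw [pIter]
  beta_reduce
  rw [if_neg (by simp [Nat.odd_iff]; omega)]

lemma qIter_odd_eq (ν : Measure ℝ) (k : ℕ) (x : ℝ) :
    qIter ν (2*k+1) x = ∫ t in Set.Ioc (0:ℝ) x, qIter ν (2*k) t := by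
  rw [qIter]
  beta_reduce
  rw [if_pos ⟨k, by ring⟩]

lemma qIter_even_eq (ν : Measure ℝ) (k : ℕ) (x : ℝ) :
    qIter ν (2*k+2) x = ∫ t in Set.Ioc (0:ℝ) x, qIter ν (2*k+1) t ∂ν := by
  show qIter ν ((2*k+1)+1) x = _
  rw [qIter]
  beta_reduce
  rw [if_neg (by simp [Nat.odd_iff]; omega)]

lemma distF_mono [IsFiniteMeasure ν] : Monotone (distF ν) := fun a b hab => by
  unfold distF
  exact ENNReal.toReal_le_toReal (measure_ne_top _ _) (measure_ne_top _ _) |>.mpr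
    (measure_mono (Set.Icc_subset_Icc le_rfl hab))

lemma distF_nonneg (x : ℝ) : 0 ≤ distF ν x := ENNReal.toReal_nonneg

lemma distF_le_one [IsProbabilityMeasure ν] (x : ℝ) : distF ν x ≤ 1 := by
  unfold distF
  exact ENNReal.toReal_le_of_le_ofReal one_pos.le (by simpa using prob_le_one)

lemma distF_sub [IsProbabilityMeasure ν] [NullSingletonClass ν] {s x : ℝ} (hs : 0 ≤ s) (hsx : s ≤ x) :
    (ν (Set.Ioc s x)).toReal = distF ν x - distF ν s := by
  have h : ν (Set.Icc 0 s) + ν (Set.Ioc s x) = ν (Set.Icc 0 x) := by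
    rw [← measure_union (by exact (Set.Iic_disjoint_Ioc le_rfl).mono_left Set.Icc_subset_Iic_self) measurableSet_Ioc,
      Set.Icc_union_Ioc_eq_Icc hs hsx]
  unfold distF
  rw [← h, ENNReal.toReal_add (measure_ne_top _ _) (measure_ne_top _ _)]
  ring

lemma distF_Icc_eq [IsProbabilityMeasure ν] [NullSingletonClass ν] {s x : ℝ} (hs : 0 ≤ s) (hsx : s ≤ x) :
    (ν (Set.Icc s x)).toReal = distF ν x - distF ν s := by
  rw [← distF_sub hs hsx, measure_congr (Ioc_ae_eq_Icc (μ := ν))]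

lemma monoInt {μ' : Measure ℝ} {y : ℝ} (hfin : μ' (Set.Ioc 0 y) ≠ ⊤) {f : ℝ → ℝ}
    (hf : Monotone f) (h0 : ∀ t, 0 ≤ f t) : IntegrableOn f (Set.Ioc 0 y) μ' := by
  haveI : IsFiniteMeasure (μ'.restrict (Set.Ioc 0 y)) :=
    ⟨by rwa [Measure.restrict_apply_univ, lt_top_iff_ne_top]⟩
  refine Integrable.mono' (integrable_const (f y)) hf.measurable.aestronglyMeasurable ?_
  rw [ae_restrict_iff' measurableSet_Ioc]
  filter_upwards with t ht
  rw [Real.norm_eq_abs, abs_of_nonneg (h0 t)]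
  exact hf ht.2

lemma step_mono {μ' : Measure ℝ} (hfin : ∀ y, μ' (Set.Ioc 0 y) ≠ ⊤) {f : ℝ → ℝ}
    (hf : Monotone f) (h0 : ∀ t, 0 ≤ f t) :
    Monotone (fun x => ∫ t in Set.Ioc (0:ℝ) x, f t ∂μ') := by
  intro a b hab
  exact setIntegral_mono_set (monoInt (hfin b) hf h0)
    (Eventually.of_forall fun t => h0 t)
    (HasSubset.Subset.eventuallyLE (Set.Ioc_subset_Ioc le_rfl hab))

lemma step_nonneg {μ' : Measure ℝ} {f : ℝ → ℝ} (h0 : ∀ t, 0 ≤ f t) (x : ℝ) :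
    0 ≤ ∫ t in Set.Ioc (0:ℝ) x, f t ∂μ' :=
  setIntegral_nonneg measurableSet_Ioc fun t _ => h0 t

lemma nu_fin [IsProbabilityMeasure ν] : ∀ y : ℝ, ν (Set.Ioc 0 y) ≠ ⊤ :=
  fun _ => measure_ne_top _ _

lemma vol_fin : ∀ y : ℝ, (volume : Measure ℝ) (Set.Ioc 0 y) ≠ ⊤ := by
  intro y; simp [Real.volume_Ioc]

lemma pIter_mono_nonneg [IsProbabilityMeasure ν] (n : ℕ) :
    Monotone (pIter ν n) ∧ ∀ t, 0 ≤ pIter ν n t := by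
  induction n with
  | zero => exact ⟨monotone_const, fun _ => zero_le_one⟩
  | succ n ih =>
    have : pIter ν (n+1) = fun x =>
        if Odd (n+1) then ∫ t in Set.Ioc (0:ℝ) x, pIter ν n t ∂ν
        else ∫ t in Set.Ioc (0:ℝ) x, pIter ν n t := rfl
    rw [this]
    split_ifs
    · exact ⟨step_mono nu_fin ih.1 ih.2, fun x => step_nonneg ih.2 x⟩
    · exact ⟨step_mono vol_fin ih.1 ih.2, fun x => step_nonneg ih.2 x⟩

lemma qIter_mono_nonneg [IsProbabilityMeasure ν] (n : ℕ) :
    Monotone (qIter ν n) ∧ ∀ t, 0 ≤ qIter ν n t := by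
  induction n with
  | zero => exact ⟨monotone_const, fun _ => zero_le_one⟩
  | succ n ih =>
    have : qIter ν (n+1) = fun x =>
        if Odd (n+1) then ∫ t in Set.Ioc (0:ℝ) x, qIter ν n t
        else ∫ t in Set.Ioc (0:ℝ) x, qIter ν n t ∂ν := rfl
    rw [this]
    split_ifs
    · exact ⟨step_mono vol_fin ih.1 ih.2, fun x => step_nonneg ih.2 x⟩
    · exact ⟨step_mono nu_fin ih.1 ih.2, fun x => step_nonneg ih.2 x⟩

end Aux

section Bounds

variable {ν : Measure ℝ}

lemma pIter_one_eq [IsProbabilityMeasure ν] [NullSingletonClass ν] (x : ℝ) :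
    pIter ν 1 x = distF ν x := by
  have h := pIter_odd_eq ν 0 x
  norm_num at h
  rw [h]
  show ∫ _ in Set.Ioc (0:ℝ) x, (1:ℝ) ∂ν = _
  rw [setIntegral_const, measureReal_def, measure_congr (Ioc_ae_eq_Icc (μ := ν))]
  simp [distF]

lemma qIter_one_eq (x : ℝ) (hx : 0 ≤ x) : qIter ν 1 x = x := by
  have h := qIter_odd_eq ν 0 x
  norm_num at h
  rw [h]
  show ∫ _ in Set.Ioc (0:ℝ) x, (1:ℝ) = _
  rw [setIntegral_const]
  simp [Real.volume_Ioc, hx]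

/-- ν-step bound: `∫_{(0,x]} f dν ≤ f x` for monotone nonneg f. -/
lemma nu_step_le [IsProbabilityMeasure ν] {f : ℝ → ℝ} (hf : Monotone f) (h0 : ∀ t, 0 ≤ f t)
    (x : ℝ) : ∫ t in Set.Ioc (0:ℝ) x, f t ∂ν ≤ f x := by
  calc ∫ t in Set.Ioc (0:ℝ) x, f t ∂ν ≤ ∫ _ in Set.Ioc (0:ℝ) x, f x ∂ν := by
        refine setIntegral_mono_on (monoInt (nu_fin x) hf h0)
          (integrable_const _) measurableSet_Ioc fun t ht => hf ht.2
    _ = (ν (Set.Ioc 0 x)).toReal • f x := setIntegral_const _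
    _ ≤ 1 * f x := by
        refine mul_le_mul_of_nonneg_right ?_ (h0 x)
        exact ENNReal.toReal_le_of_le_ofReal one_pos.le (by simpa using prob_le_one)
    _ = f x := one_mul _

lemma pow_int_eq (c : ℝ) (m : ℕ) {x : ℝ} (hx : 0 ≤ x) :
    ∫ s in Set.Ioc (0:ℝ) x, c * s^m = c * x^(m+1)/(m+1) := by
  rw [← intervalIntegral.integral_of_le hx, intervalIntegral.integral_const_mul,
    integral_pow]
  simp [mul_div_assoc]

/-- Lebesgue step bound. -/
lemma leb_step_le {f : ℝ → ℝ} (hfi : IntegrableOn f (Set.Ioc 0 x) volume)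
    {c : ℝ} {m : ℕ} (hb : ∀ s ∈ Set.Ioc (0:ℝ) x, f s ≤ c * s^m) (hx : 0 ≤ x) :
    ∫ t in Set.Ioc (0:ℝ) x, f t ≤ c * x^(m+1)/(m+1) := by
  calc ∫ t in Set.Ioc (0:ℝ) x, f t ≤ ∫ s in Set.Ioc (0:ℝ) x, c * s^m :=
        setIntegral_mono_on hfi ((continuous_const.mul (continuous_pow m)).integrableOn_Ioc)
          measurableSet_Ioc hb
    _ = c * x^(m+1)/(m+1) := pow_int_eq c m hx

lemma fact_div (n : ℕ) (x : ℝ) : 1/(n.factorial:ℝ) * x^(n+1)/(n+1) = x^(n+1) / (n+1).factorial := by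
  have hn : (n.factorial:ℝ) ≠ 0 := Nat.cast_ne_zero.mpr n.factorial_ne_zero
  have hn1 : ((n:ℝ)+1) ≠ 0 := by positivity
  rw [Nat.factorial_succ]; push_cast; field_simp

lemma iter_le [IsProbabilityMeasure ν] [NullSingletonClass ν] (n : ℕ) :
    ∀ x ∈ Set.Icc (0:ℝ) 1,
      pIter ν (2*n) x ≤ x^n / n.factorial ∧ pIter ν (2*n+1) x ≤ x^n / n.factorial ∧
      qIter ν (2*n) x ≤ x^n / n.factorial ∧ qIter ν (2*n+1) x ≤ x^(n+1) / (n+1).factorial := by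
  induction n with
  | zero =>
    intro x hx
    refine ⟨by simp [pIter], ?_, by simp [qIter], ?_⟩
    · have h := pIter_one_eq (ν := ν) x
      norm_num at h ⊢
      rw [h]; exact distF_le_one x
    · have h := qIter_one_eq (ν := ν) x hx.1
      norm_num at h ⊢
      rw [h]
  | succ n ih =>
    have heven : ∀ y ∈ Set.Icc (0:ℝ) 1,
        pIter ν (2*(n+1)) y ≤ y^(n+1) / (n+1).factorial ∧
        qIter ν (2*(n+1)) y ≤ y^(n+1) / (n+1).factorial := by
      intro y hy
      constructor
      · rw [show (2*(n+1)) = 2*n+2 by ring, pIter_even_eq]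
        have h := leb_step_le (c := 1/n.factorial) (m := n) (x := y)
          (monoInt (vol_fin y) (pIter_mono_nonneg (2*n+1)).1 (pIter_mono_nonneg (2*n+1)).2)
          (fun s hs => by
            calc pIter ν (2*n+1) s ≤ s^n / n.factorial :=
                  (ih s ⟨hs.1.le, hs.2.trans hy.2⟩).2.1
              _ = 1/n.factorial * s^n := by ring) hy.1
        calc (∫ t in Set.Ioc (0:ℝ) y, pIter ν (2*n+1) t) ≤ 1/n.factorial * y^(n+1)/(n+1) := h
          _ = y^(n+1) / (n+1).factorial := fact_div n y
      · rw [show (2*(n+1)) = 2*n+2 by ring, qIter_even_eq]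
        calc (∫ t in Set.Ioc (0:ℝ) y, qIter ν (2*n+1) t ∂ν) ≤ qIter ν (2*n+1) y :=
            nu_step_le (qIter_mono_nonneg (2*n+1)).1 (qIter_mono_nonneg (2*n+1)).2 y
          _ ≤ y^(n+1) / (n+1).factorial := (ih y hy).2.2.2
    intro x hx
    refine ⟨(heven x hx).1, ?_, (heven x hx).2, ?_⟩
    · rw [pIter_odd_eq]
      calc (∫ t in Set.Ioc (0:ℝ) x, pIter ν (2*(n+1)) t ∂ν) ≤ pIter ν (2*(n+1)) x :=
          nu_step_le (pIter_mono_nonneg _).1 (pIter_mono_nonneg _).2 x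
        _ ≤ x^(n+1) / (n+1).factorial := (heven x hx).1
    · rw [qIter_odd_eq]
      have h := leb_step_le (c := 1/(n+1).factorial) (m := n+1) (x := x)
        (monoInt (vol_fin x) (qIter_mono_nonneg (2*(n+1))).1 (qIter_mono_nonneg (2*(n+1))).2)
        (fun s hs => by
          calc qIter ν (2*(n+1)) s ≤ s^(n+1) / (n+1).factorial :=
                (heven s ⟨hs.1.le, hs.2.trans hx.2⟩).2
            _ = 1/(n+1).factorial * s^(n+1) := by ring) hx.1
      calc (∫ t in Set.Ioc (0:ℝ) x, qIter ν (2*(n+1)) t)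
          ≤ 1/((n+1).factorial:ℝ) * x^(n+1+1)/((n+1:ℕ)+1) := h
        _ = x^(n+1+1) / ((n+1)+1).factorial := fact_div (n+1) x

end Bounds

section Fubini

variable {ν : Measure ℝ}

lemma fubini_step [IsProbabilityMeasure ν] [NullSingletonClass ν] {h : ℝ → ℝ}
    (hm : Monotone h) (h0 : ∀ t, 0 ≤ h t) {x : ℝ} (hx : 0 ≤ x) :
    ∫ t in Set.Ioc (0:ℝ) x, (∫ s in Set.Ioc (0:ℝ) t, h s) ∂ν
      = ∫ s in Set.Ioc (0:ℝ) x, h s * (distF ν x - distF ν s) := by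
  have step1 : ∀ t ∈ Set.Ioc (0:ℝ) x,
      (∫ s in Set.Ioc (0:ℝ) t, h s) = ∫ s in Set.Ioc (0:ℝ) x, (Set.Iic t).indicator h s := by
    intro t ht
    rw [setIntegral_indicator measurableSet_Iic, Set.Ioc_inter_Iic, min_eq_right ht.2]
  rw [setIntegral_congr_fun measurableSet_Ioc step1]
  have hmeas : Measurable (Function.uncurry fun t s => (Set.Iic t).indicator h s) := by
    have he : (Function.uncurry fun t s => (Set.Iic t).indicator h s)
        = Set.indicator {p : ℝ × ℝ | p.2 ≤ p.1} (fun p => h p.2) := by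
      ext p
      by_cases hp : p.2 ≤ p.1 <;>
        simp [Function.uncurry, Set.indicator, Set.mem_Iic, Set.mem_setOf_eq, hp]
    rw [he]
    exact ((hm.measurable).comp measurable_snd).indicator
      (measurableSet_le measurable_snd measurable_fst)
  haveI : IsFiniteMeasure ((volume : Measure ℝ).restrict (Set.Ioc (0:ℝ) x)) :=
    ⟨by rw [Measure.restrict_apply_univ]; simp [Real.volume_Ioc]⟩
  have hint : Integrable (Function.uncurry fun t s => (Set.Iic t).indicator h s)
      ((ν.restrict (Set.Ioc 0 x)).prod ((volume : Measure ℝ).restrict (Set.Ioc 0 x))) := by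
    refine Integrable.mono' (integrable_const (h x)) hmeas.aestronglyMeasurable ?_
    rw [Measure.prod_restrict, ae_restrict_iff' (measurableSet_Ioc.prod measurableSet_Ioc)]
    filter_upwards with p hp
    by_cases hle : p.2 ≤ p.1
    · simp only [Function.uncurry, Set.indicator_of_mem (Set.mem_Iic.mpr hle)]
      rw [Real.norm_eq_abs, abs_of_nonneg (h0 _)]
      exact hm hp.2.2
    · simp only [Function.uncurry, Set.indicator_of_notMem fun hmem => hle (Set.mem_Iic.mp hmem)]
      simpa using h0 x
  rw [integral_integral_swap hint]
  refine setIntegral_congr_fun measurableSet_Ioc fun s hs => ?_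
  have he2 : (fun t => (Set.Iic t).indicator h s)
      = fun t => (Set.Ici s).indicator (fun _ => h s) t := by
    ext t
    by_cases hst : s ≤ t <;> simp [Set.indicator, Set.mem_Iic, Set.mem_Ici, hst]
  rw [he2, setIntegral_indicator measurableSet_Ici, setIntegral_const]
  have hset : Set.Ioc (0:ℝ) x ∩ Set.Ici s = Set.Icc s x := by
    ext t
    simp only [Set.mem_inter_iff, Set.mem_Ioc, Set.mem_Ici, Set.mem_Icc]
    constructor
    · rintro ⟨⟨_, h2⟩, h3⟩; exact ⟨h3, h2⟩
    · rintro ⟨h1, h2⟩; exact ⟨⟨lt_of_lt_of_le hs.1 h1, h2⟩, h1⟩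
  rw [hset, measureReal_def, distF_Icc_eq hs.1.le hs.2, smul_eq_mul]
  ring

end Fubini

section Key

variable {ν ν' : Measure ℝ}

lemma int_mul_distF [IsProbabilityMeasure ν] {h : ℝ → ℝ} (hm : Monotone h)
    (h0 : ∀ t, 0 ≤ h t) (x : ℝ) :
    IntegrableOn (fun s => h s * (distF ν x - distF ν s)) (Set.Ioc 0 x) volume := by
  haveI : IsFiniteMeasure ((volume : Measure ℝ).restrict (Set.Ioc (0:ℝ) x)) :=
    ⟨by rw [Measure.restrict_apply_univ]; simp [Real.volume_Ioc]⟩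
  refine Integrable.mono' (integrable_const (h x))
    ((hm.measurable.mul (measurable_const.sub distF_mono.measurable)).aestronglyMeasurable) ?_
  rw [ae_restrict_iff' measurableSet_Ioc]
  filter_upwards with t ht
  rw [Real.norm_eq_abs, abs_mul]
  have h1 : |h t| ≤ h x := by rw [abs_of_nonneg (h0 t)]; exact hm ht.2
  have h2 : |distF ν x - distF ν t| ≤ 1 := by
    rw [abs_of_nonneg (sub_nonneg.mpr (distF_mono ht.2))]
    linarith [distF_le_one (ν := ν) x, distF_nonneg (ν := ν) t]
  calc |h t| * |distF ν x - distF ν t| ≤ h x * 1 :=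
        mul_le_mul h1 h2 (abs_nonneg _) (h0 x)
    _ = h x := mul_one _

lemma key_est [IsProbabilityMeasure ν] [IsProbabilityMeasure ν'] [NullSingletonClass ν] [NullSingletonClass ν']
    {h h' : ℝ → ℝ} (hm : Monotone h) (h0 : ∀ t, 0 ≤ h t)
    (hm' : Monotone h') (h0' : ∀ t, 0 ≤ h' t)
    {x : ℝ} (hx : x ∈ Set.Icc (0:ℝ) 1) {α β C : ℝ} {j k : ℕ}
    (hβ : 0 ≤ β) (hC : 0 ≤ C)
    (hFC : ∀ s ∈ Set.Icc (0:ℝ) 1, |distF ν s - distF ν' s| ≤ C)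
    (ha : ∀ s ∈ Set.Ioc (0:ℝ) x, |h s - h' s| ≤ α * s^j)
    (hb : ∀ s ∈ Set.Ioc (0:ℝ) x, h' s ≤ β * s^k) :
    |(∫ t in Set.Ioc (0:ℝ) x, (∫ s in Set.Ioc (0:ℝ) t, h s) ∂ν)
      - ∫ t in Set.Ioc (0:ℝ) x, (∫ s in Set.Ioc (0:ℝ) t, h' s) ∂ν'|
      ≤ α * x^(j+1)/(j+1) + 2*C*β * x^(k+1)/(k+1) := by
  rw [fubini_step hm h0 hx.1, fubini_step hm' h0' hx.1,
    ← integral_sub (int_mul_distF hm h0 x) (int_mul_distF hm' h0' x)]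
  have habs : ∀ s ∈ Set.Ioc (0:ℝ) x,
      |h s * (distF ν x - distF ν s) - h' s * (distF ν' x - distF ν' s)|
        ≤ α * s^j + 2*C*β * s^k := by
    intro s hs
    have hsI : s ∈ Set.Icc (0:ℝ) 1 := ⟨hs.1.le, hs.2.trans hx.2⟩
    have e : h s * (distF ν x - distF ν s) - h' s * (distF ν' x - distF ν' s)
        = (h s - h' s) * (distF ν x - distF ν s)
          + h' s * ((distF ν x - distF ν' x) - (distF ν s - distF ν' s)) := by ring
    rw [e]
    have b1 : |(h s - h' s) * (distF ν x - distF ν s)| ≤ α * s^j := by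
      rw [abs_mul]
      have h2 : |distF ν x - distF ν s| ≤ 1 := by
        rw [abs_of_nonneg (sub_nonneg.mpr (distF_mono hs.2))]
        linarith [distF_le_one (ν := ν) x, distF_nonneg (ν := ν) s]
      calc |h s - h' s| * |distF ν x - distF ν s| ≤ (α * s^j) * 1 :=
            mul_le_mul (ha s hs) h2 (abs_nonneg _) (le_trans (abs_nonneg _) (ha s hs))
        _ = α * s^j := mul_one _
    have b2 : |h' s * ((distF ν x - distF ν' x) - (distF ν s - distF ν' s))|
        ≤ 2*C*β * s^k := by
      rw [abs_mul, abs_of_nonneg (h0' s)]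
      have h3 : |(distF ν x - distF ν' x) - (distF ν s - distF ν' s)| ≤ 2*C := by
        calc |(distF ν x - distF ν' x) - (distF ν s - distF ν' s)|
            ≤ |distF ν x - distF ν' x| + |distF ν s - distF ν' s| := abs_sub _ _
          _ ≤ C + C := add_le_add (hFC x hx) (hFC s hsI)
          _ = 2*C := by ring
      calc h' s * |(distF ν x - distF ν' x) - (distF ν s - distF ν' s)|
          ≤ (β * s^k) * (2*C) := mul_le_mul (hb s hs) h3 (abs_nonneg _)
            (le_trans (h0' s) (hb s hs))
        _ = 2*C*β * s^k := by ring
    calc |(h s - h' s) * (distF ν x - distF ν s)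
          + h' s * ((distF ν x - distF ν' x) - (distF ν s - distF ν' s))|
        ≤ |(h s - h' s) * (distF ν x - distF ν s)|
          + |h' s * ((distF ν x - distF ν' x) - (distF ν s - distF ν' s))| := abs_add_le _ _
      _ ≤ α * s^j + 2*C*β * s^k := add_le_add b1 b2
  have hcont : IntegrableOn (fun s => α * s^j + 2*C*β * s^k) (Set.Ioc 0 x) volume :=
    (((continuous_const.mul (continuous_pow j)).add
      (continuous_const.mul (continuous_pow k)))).integrableOn_Ioc
  calc |∫ s in Set.Ioc (0:ℝ) x,
        (h s * (distF ν x - distF ν s) - h' s * (distF ν' x - distF ν' s))|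
      ≤ ∫ s in Set.Ioc (0:ℝ) x,
        |h s * (distF ν x - distF ν s) - h' s * (distF ν' x - distF ν' s)| := by
        simpa [Real.norm_eq_abs] using norm_integral_le_integral_norm
          (fun s => h s * (distF ν x - distF ν s) - h' s * (distF ν' x - distF ν' s))
    _ ≤ ∫ s in Set.Ioc (0:ℝ) x, (α * s^j + 2*C*β * s^k) := by
        refine setIntegral_mono_on ?_ hcont measurableSet_Ioc habs
        exact ((int_mul_distF hm h0 x).sub (int_mul_distF hm' h0' x)).abs
    _ = α * x^(j+1)/(j+1) + 2*C*β * x^(k+1)/(k+1) := by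
        rw [integral_add (f := fun s => α * s^j) (g := fun s => 2*C*β * s^k) ((continuous_const.mul (continuous_pow j)).integrableOn_Ioc)
          ((continuous_const.mul (continuous_pow k)).integrableOn_Ioc),
          pow_int_eq α j hx.1, pow_int_eq (2*C*β) k hx.1]

lemma leb_diff {f g : ℝ → ℝ} {x : ℝ} (hfi : IntegrableOn f (Set.Ioc 0 x) volume)
    (hgi : IntegrableOn g (Set.Ioc 0 x) volume) (hx : 0 ≤ x) {c : ℝ} {m : ℕ}
    (hb : ∀ s ∈ Set.Ioc (0:ℝ) x, |f s - g s| ≤ c * s^m) :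
    |(∫ s in Set.Ioc (0:ℝ) x, f s) - ∫ s in Set.Ioc (0:ℝ) x, g s| ≤ c * x^(m+1)/(m+1) := by
  rw [← integral_sub hfi hgi]
  calc |∫ s in Set.Ioc (0:ℝ) x, (f s - g s)|
      ≤ ∫ s in Set.Ioc (0:ℝ) x, |f s - g s| := by
        simpa [Real.norm_eq_abs] using norm_integral_le_integral_norm (fun s => f s - g s)
    _ ≤ ∫ s in Set.Ioc (0:ℝ) x, c * s^m :=
        setIntegral_mono_on (hfi.sub hgi).abs
          ((continuous_const.mul (continuous_pow m)).integrableOn_Ioc) measurableSet_Ioc hb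
    _ = c * x^(m+1)/(m+1) := pow_int_eq c m hx

end Key

section Main

variable {ν ν' : Measure ℝ}

lemma pIter_two_eq [IsProbabilityMeasure ν] [NullSingletonClass ν] (t : ℝ) :
    pIter ν 2 t = ∫ s in Set.Ioc (0:ℝ) t, distF ν s := by
  have h := pIter_even_eq ν 0 t
  norm_num at h
  rw [h]
  refine setIntegral_congr_fun measurableSet_Ioc fun s _ => ?_
  exact pIter_one_eq s

lemma p3_est [IsProbabilityMeasure ν] [IsProbabilityMeasure ν'] [NullSingletonClass ν] [NullSingletonClass ν']
    {x : ℝ} (hx : x ∈ Set.Icc (0:ℝ) 1) {C : ℝ} (hC : 0 ≤ C)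
    (hFC : ∀ s ∈ Set.Icc (0:ℝ) 1, |distF ν s - distF ν' s| ≤ C) :
    |pIter ν 3 x - pIter ν' 3 x| ≤ 2*C*x := by
  have e1 : ∀ (μ : Measure ℝ) [IsProbabilityMeasure μ] [NullSingletonClass μ],
      pIter μ 3 x = ∫ s in Set.Ioc (0:ℝ) x, distF μ s * (distF μ x - distF μ s) := by
    intro μ _ _
    have h := pIter_odd_eq μ 1 x
    norm_num at h
    rw [h, setIntegral_congr_fun measurableSet_Ioc (fun t _ => pIter_two_eq t)]
    exact fubini_step distF_mono distF_nonneg hx.1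
  rw [e1 ν, e1 ν',
    ← integral_sub (int_mul_distF distF_mono distF_nonneg x)
      (int_mul_distF distF_mono distF_nonneg x)]
  have habs : ∀ s ∈ Set.Ioc (0:ℝ) x,
      |distF ν s * (distF ν x - distF ν s) - distF ν' s * (distF ν' x - distF ν' s)|
        ≤ 2*C := by
    intro s hs
    have hsI : s ∈ Set.Icc (0:ℝ) 1 := ⟨hs.1.le, hs.2.trans hx.2⟩
    set a := distF ν s with ha'
    set b := distF ν' s with hb'
    set c := distF ν x with hc'
    set d := distF ν' x with hd'
    have hab := abs_le.1 (hFC s hsI)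
    have hcd := abs_le.1 (hFC x hx)
    have hac : a ≤ c := distF_mono hs.2
    have hbd : b ≤ d := distF_mono hs.2
    have ha0 : 0 ≤ a := distF_nonneg s
    have hb0 : 0 ≤ b := distF_nonneg s
    have hc1 : c ≤ 1 := distF_le_one x
    have hd1 : d ≤ 1 := distF_le_one x
    have p1 : (0:ℝ) ≤ (C-(a-b))*(1-(c-a-b)) := mul_nonneg (by linarith) (by linarith)
    have p2 : (0:ℝ) ≤ (C+(a-b))*(1+(c-a-b)) := mul_nonneg (by linarith) (by linarith)
    have p3 : (0:ℝ) ≤ (C-(a-b))*(1+(c-a-b)) := mul_nonneg (by linarith) (by linarith)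
    have p4 : (0:ℝ) ≤ (C+(a-b))*(1-(c-a-b)) := mul_nonneg (by linarith) (by linarith)
    have p5 : (0:ℝ) ≤ b*(C-(c-d)) := mul_nonneg hb0 (by linarith)
    have p6 : (0:ℝ) ≤ b*(C+(c-d)) := mul_nonneg hb0 (by linarith)
    have p7 : (0:ℝ) ≤ (1-b)*C := mul_nonneg (by linarith) hC
    rw [abs_le]
    constructor <;> nlinarith [p1, p2, p3, p4, p5, p6, p7]
  calc |∫ s in Set.Ioc (0:ℝ) x,
        (distF ν s * (distF ν x - distF ν s) - distF ν' s * (distF ν' x - distF ν' s))|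
      ≤ ∫ s in Set.Ioc (0:ℝ) x,
        |distF ν s * (distF ν x - distF ν s) - distF ν' s * (distF ν' x - distF ν' s)| := by
        simpa [Real.norm_eq_abs] using norm_integral_le_integral_norm
          (fun s => distF ν s * (distF ν x - distF ν s)
            - distF ν' s * (distF ν' x - distF ν' s))
    _ ≤ ∫ _ in Set.Ioc (0:ℝ) x, (2*C) :=
        setIntegral_mono_on
          ((int_mul_distF distF_mono distF_nonneg x).sub
            (int_mul_distF distF_mono distF_nonneg x)).abs
          (integrable_const _) measurableSet_Ioc habs
    _ = (volume (Set.Ioc (0:ℝ) x)).toReal • (2*C) := setIntegral_const _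
    _ = 2*C*x := by
        rw [Real.volume_Ioc, smul_eq_mul]
        rw [ENNReal.toReal_ofReal (by linarith [hx.1] : (0:ℝ) ≤ x - 0)]
        ring
  
lemma qIter_double (ν : Measure ℝ) (k : ℕ) (x : ℝ) :
    qIter ν (2*k+2) x
      = ∫ t in Set.Ioc (0:ℝ) x, (∫ s in Set.Ioc (0:ℝ) t, qIter ν (2*k) s) ∂ν := by
  rw [qIter_even_eq]
  exact setIntegral_congr_fun measurableSet_Ioc fun t _ => qIter_odd_eq ν k t

lemma pIter_double (ν : Measure ℝ) (k : ℕ) (x : ℝ) :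
    pIter ν (2*(k+1)+1) x
      = ∫ t in Set.Ioc (0:ℝ) x, (∫ s in Set.Ioc (0:ℝ) t, pIter ν (2*k+1) s) ∂ν := by
  rw [pIter_odd_eq]
  refine setIntegral_congr_fun measurableSet_Ioc fun t _ => ?_
  rw [show 2*(k+1) = 2*k+2 by ring, pIter_even_eq]

end Main

lemma arith2 {D x : ℝ} (hD : 0 ≤ D) (hx0 : 0 ≤ x) (hx1 : x ≤ 1) (m : ℕ) {c : ℝ}
    (hc : (1:ℝ) ≤ c) :
    2*D/(m.factorial:ℝ) * x^(m+1+1)/c ≤ 2*D*x^(m+1)/(m.factorial:ℝ) := by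
  have h1 : (0:ℝ) < m.factorial := by
    exact_mod_cast m.factorial_pos
  have hnum : 0 ≤ 2*D/(m.factorial:ℝ) := div_nonneg (by linarith) h1.le
  have hxp : x^(m+1+1) ≤ x^(m+1) := pow_le_pow_of_le_one hx0 hx1 (by omega)
  calc 2*D/(m.factorial:ℝ) * x^(m+1+1)/c ≤ 2*D/(m.factorial:ℝ) * x^(m+1+1)/1 :=
        div_le_div_of_nonneg_left (mul_nonneg hnum (pow_nonneg hx0 _)) one_pos hc
    _ = 2*D/(m.factorial:ℝ) * x^(m+1+1) := div_one _
    _ ≤ 2*D/(m.factorial:ℝ) * x^(m+1) := mul_le_mul_of_nonneg_left hxp hnum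
    _ = 2*D*x^(m+1)/(m.factorial:ℝ) := by ring

lemma arith3 {D x : ℝ} (hD : 0 ≤ D) (hx0 : 0 ≤ x) (k : ℕ) {c : ℝ} (hc : ((k:ℝ)+1)+1 ≤ c) :
    2*D/(k.factorial:ℝ) * x^(k+1+1)/c ≤ 2*D*x^(k+1+1)/((k+1).factorial:ℝ) := by
  have h1 : (0:ℝ) < (k+1).factorial := by exact_mod_cast (k+1).factorial_pos
  have h0 : (0:ℝ) < k.factorial := by exact_mod_cast k.factorial_pos
  have hcpos : (0:ℝ) < c := lt_of_lt_of_le (by positivity) hc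
  have e : 2*D/(k.factorial:ℝ) * x^(k+1+1)/c = 2*D*x^(k+1+1)/(c*(k.factorial:ℝ)) := by ring
  rw [e]
  refine div_le_div_of_nonneg_left (by
      have : (0:ℝ) ≤ x^(k+1+1) := pow_nonneg hx0 _
      nlinarith) h1 ?_
  have hf : ((k+1).factorial:ℝ) = ((k:ℝ)+1) * k.factorial := by
    rw [Nat.factorial_succ]; push_cast; ring
  rw [hf]
  have : ((k:ℝ)+1) ≤ c := by linarith
  nlinarith

theorem stmt9' (ν ν' : Measure ℝ) [IsProbabilityMeasure ν] [IsProbabilityMeasure ν']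
    [NullSingletonClass ν] [NullSingletonClass ν']
    (x : ℝ) (hx : x ∈ Set.Icc (0:ℝ) 1) (n : ℕ) (hn : 1 ≤ n) :
    |qIter ν (2*n) x - qIter ν' (2*n) x|
        ≤ 2 * supDist (distF ν) (distF ν') * x^n / (n-1).factorial ∧
    |pIter ν (2*n) x - pIter ν' (2*n) x|
        ≤ 2 * supDist (distF ν) (distF ν') * x^n / (n-1).factorial ∧
    |qIter ν (2*n+1) x - qIter ν' (2*n+1) x|
        ≤ 2 * supDist (distF ν) (distF ν') * x^n / (n-1).factorial ∧
    |pIter ν (2*n+1) x - pIter ν' (2*n+1) x|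
        ≤ 2 * supDist (distF ν) (distF ν') * x^n / (n-1).factorial := by
  set D := supDist (distF ν) (distF ν') with hDdef
  have hD0 : 0 ≤ D := Real.iSup_nonneg fun _ => abs_nonneg _
  have hFC : ∀ s ∈ Set.Icc (0:ℝ) 1, |distF ν s - distF ν' s| ≤ D := by
    intro s hs
    have hbdd : BddAbove (Set.range fun y : Set.Icc (0:ℝ) 1 => |distF ν y.1 - distF ν' y.1|) := by
      refine ⟨2, ?_⟩
      rintro r ⟨y, rfl⟩
      have := distF_le_one (ν := ν) y.1
      have := distF_le_one (ν := ν') y.1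
      have := distF_nonneg (ν := ν) y.1
      have := distF_nonneg (ν := ν') y.1
      rw [abs_le]; constructor <;> linarith
    exact le_ciSup hbdd (⟨s, hs⟩ : Set.Icc (0:ℝ) 1)
  -- main induction: even q's and odd p's
  have main : ∀ m : ℕ, ∀ y ∈ Set.Icc (0:ℝ) 1,
      |qIter ν (2*(m+1)) y - qIter ν' (2*(m+1)) y| ≤ 2*D*y^(m+1)/m.factorial ∧
      |pIter ν (2*(m+1)+1) y - pIter ν' (2*(m+1)+1) y| ≤ 2*D*y^(m+1)/m.factorial := by
    intro m
    induction m with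
    | zero =>
      intro y hy
      constructor
      · rw [show 2*(0+1) = 2*0+2 from rfl, qIter_double ν 0 y, qIter_double ν' 0 y]
        have hkey := key_est (ν := ν) (ν' := ν')
          (h := qIter ν (2*0)) (h' := qIter ν' (2*0))
          (qIter_mono_nonneg _).1 (qIter_mono_nonneg _).2
          (qIter_mono_nonneg _).1 (qIter_mono_nonneg _).2
          hy (α := 0) (β := 1) (C := D) (j := 0) (k := 0) zero_le_one hD0 hFC
          (fun s _ => by simp [qIter]) (fun s _ => by simp [qIter])
        calc _ ≤ _ := hkey
          _ = 2*D*y^(0+1)/(Nat.factorial 0 : ℝ) := by norm_num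
      · have e3 : ∀ (μ : Measure ℝ), pIter μ (2*(0+1)+1) y = pIter μ 3 y := fun _ => rfl
        rw [e3 ν, e3 ν']
        calc |pIter ν 3 y - pIter ν' 3 y| ≤ 2*D*y := p3_est hy hD0 hFC
          _ = 2*D*y^(0+1)/(Nat.factorial 0 : ℝ) := by norm_num
    | succ m ih =>
      intro y hy
      have ihq : ∀ s ∈ Set.Ioc (0:ℝ) y,
          |qIter ν (2*(m+1)) s - qIter ν' (2*(m+1)) s| ≤ (2*D/m.factorial) * s^(m+1) := by
        intro s hs
        calc |qIter ν (2*(m+1)) s - qIter ν' (2*(m+1)) s| ≤ 2*D*s^(m+1)/m.factorial :=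
              (ih s ⟨hs.1.le, hs.2.trans hy.2⟩).1
          _ = (2*D/m.factorial) * s^(m+1) := by ring
      have ihp : ∀ s ∈ Set.Ioc (0:ℝ) y,
          |pIter ν (2*(m+1)+1) s - pIter ν' (2*(m+1)+1) s| ≤ (2*D/m.factorial) * s^(m+1) := by
        intro s hs
        calc |pIter ν (2*(m+1)+1) s - pIter ν' (2*(m+1)+1) s| ≤ 2*D*s^(m+1)/m.factorial :=
              (ih s ⟨hs.1.le, hs.2.trans hy.2⟩).2
          _ = (2*D/m.factorial) * s^(m+1) := by ring
      have harith : ∀ c : ℝ, c = ((m+1:ℕ):ℝ)+1 →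
          (2*D/m.factorial) * y^(m+1+1)/c + 2*D*(1/((m+1).factorial:ℝ)) * y^(m+1+1)/c
            = 2*D*y^(m+1+1)/((m+1).factorial:ℝ) := by
        intro c hc
        have hf : ((m+1).factorial:ℝ) = ((m:ℝ)+1) * m.factorial := by
          rw [Nat.factorial_succ]; push_cast; ring
        have h1 : (m.factorial:ℝ) ≠ 0 := Nat.cast_ne_zero.mpr m.factorial_ne_zero
        have h2 : ((m:ℝ)+1) ≠ 0 := by positivity
        have hc' : c = (m:ℝ)+2 := by rw [hc]; push_cast; ring
        have h3 : c ≠ 0 := by rw [hc']; positivity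
        rw [hf, hc']
        field_simp
        ring
      constructor
      · rw [show 2*(m+1+1) = 2*(m+1)+2 by ring, qIter_double ν (m+1) y,
          qIter_double ν' (m+1) y]
        have hkey := key_est (ν := ν) (ν' := ν')
          (h := qIter ν (2*(m+1))) (h' := qIter ν' (2*(m+1)))
          (qIter_mono_nonneg _).1 (qIter_mono_nonneg _).2
          (qIter_mono_nonneg _).1 (qIter_mono_nonneg _).2
          hy (α := 2*D/m.factorial) (β := 1/((m+1).factorial:ℝ)) (C := D)
          (j := m+1) (k := m+1) (by positivity) hD0 hFC ihq
          (fun s hs => by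
            calc qIter ν' (2*(m+1)) s ≤ s^(m+1)/((m+1).factorial:ℝ) :=
                  (iter_le (m+1) s ⟨hs.1.le, hs.2.trans hy.2⟩).2.2.1
              _ = 1/((m+1).factorial:ℝ) * s^(m+1) := by ring)
        calc _ ≤ _ := hkey
          _ = 2*D*y^(m+1+1)/((m+1).factorial:ℝ) := harith _ rfl
      · rw [pIter_double ν (m+1) y, pIter_double ν' (m+1) y]
        have hkey := key_est (ν := ν) (ν' := ν')
          (h := pIter ν (2*(m+1)+1)) (h' := pIter ν' (2*(m+1)+1))
          (pIter_mono_nonneg _).1 (pIter_mono_nonneg _).2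
          (pIter_mono_nonneg _).1 (pIter_mono_nonneg _).2
          hy (α := 2*D/m.factorial) (β := 1/((m+1).factorial:ℝ)) (C := D)
          (j := m+1) (k := m+1) (by positivity) hD0 hFC ihp
          (fun s hs => by
            calc pIter ν' (2*(m+1)+1) s ≤ s^(m+1)/((m+1).factorial:ℝ) :=
                  (iter_le (m+1) s ⟨hs.1.le, hs.2.trans hy.2⟩).2.1
              _ = 1/((m+1).factorial:ℝ) * s^(m+1) := by ring)
        calc _ ≤ _ := hkey
          _ = 2*D*y^(m+1+1)/((m+1).factorial:ℝ) := harith _ rfl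
  -- derive the four statements
  obtain ⟨m, rfl⟩ : ∃ m, n = m+1 := ⟨n-1, by omega⟩
  have hfac : ((m+1-1).factorial : ℝ) = (m.factorial : ℝ) := by norm_num
  refine ⟨?_, ?_, ?_, ?_⟩
  · rw [hfac]
    calc |qIter ν (2*(m+1)) x - qIter ν' (2*(m+1)) x| ≤ 2*D*x^(m+1)/m.factorial :=
          (main m x hx).1
      _ = 2 * D * x^(m+1) / m.factorial := by ring
  · -- p even
    cases m with
    | zero =>
      rw [hfac, show 2*(0+1) = 2*0+2 from rfl, pIter_even_eq ν 0 x, pIter_even_eq ν' 0 x]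
      have hld := leb_diff (x := x) (c := D) (m := 0)
        (monoInt (vol_fin x) (pIter_mono_nonneg (ν := ν) (2*0+1)).1
          (pIter_mono_nonneg (ν := ν) (2*0+1)).2)
        (monoInt (vol_fin x) (pIter_mono_nonneg (ν := ν') (2*0+1)).1
          (pIter_mono_nonneg (ν := ν') (2*0+1)).2) hx.1
        (fun s hs => by
          have e1 : pIter ν (2*0+1) s = distF ν s := pIter_one_eq s
          have e2 : pIter ν' (2*0+1) s = distF ν' s := pIter_one_eq s
          rw [e1, e2]
          calc |distF ν s - distF ν' s| ≤ D := hFC s ⟨hs.1.le, hs.2.trans hx.2⟩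
            _ = D * s^0 := by ring)
      calc _ ≤ _ := hld
        _ ≤ 2 * D * x^(0+1) / (Nat.factorial 0 : ℝ) := by
            norm_num
            nlinarith [mul_nonneg hD0 hx.1]
    | succ k =>
      rw [hfac, show 2*(k+1+1) = 2*(k+1)+2 by ring, pIter_even_eq ν (k+1) x,
        pIter_even_eq ν' (k+1) x]
      have hld := leb_diff (x := x) (c := 2*D/k.factorial) (m := k+1)
        (monoInt (vol_fin x) (pIter_mono_nonneg (ν := ν) (2*(k+1)+1)).1
          (pIter_mono_nonneg (ν := ν) (2*(k+1)+1)).2)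
        (monoInt (vol_fin x) (pIter_mono_nonneg (ν := ν') (2*(k+1)+1)).1
          (pIter_mono_nonneg (ν := ν') (2*(k+1)+1)).2) hx.1
        (fun s hs => by
          calc |pIter ν (2*(k+1)+1) s - pIter ν' (2*(k+1)+1) s|
              ≤ 2*D*s^(k+1)/k.factorial := (main k s ⟨hs.1.le, hs.2.trans hx.2⟩).2
            _ = (2*D/k.factorial) * s^(k+1) := by ring)
      calc _ ≤ _ := hld
        _ ≤ 2*D*x^(k+1+1)/((k+1).factorial:ℝ) := arith3 hD0 hx.1 k (by push_cast; linarith)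
        _ = 2 * D * x^(k+1+1) / ((k+1).factorial:ℝ) := by ring
  · -- q odd
    rw [hfac, qIter_odd_eq ν (m+1) x, qIter_odd_eq ν' (m+1) x]
    have hld := leb_diff (x := x) (c := 2*D/m.factorial) (m := m+1)
      (monoInt (vol_fin x) (qIter_mono_nonneg (ν := ν) (2*(m+1))).1
        (qIter_mono_nonneg (ν := ν) (2*(m+1))).2)
      (monoInt (vol_fin x) (qIter_mono_nonneg (ν := ν') (2*(m+1))).1
        (qIter_mono_nonneg (ν := ν') (2*(m+1))).2) hx.1
      (fun s hs => by
        calc |qIter ν (2*(m+1)) s - qIter ν' (2*(m+1)) s|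
            ≤ 2*D*s^(m+1)/m.factorial := (main m s ⟨hs.1.le, hs.2.trans hx.2⟩).1
          _ = (2*D/m.factorial) * s^(m+1) := by ring)
    calc _ ≤ _ := hld
      _ ≤ 2*D*x^(m+1)/(m.factorial:ℝ) := arith2 hD0 hx.1 hx.2 m (by have := Nat.cast_nonneg (α := ℝ) m; push_cast; linarith)
      _ = 2 * D * x^(m+1) / (m.factorial:ℝ) := by ring
  · -- p odd
    rw [hfac]
    calc |pIter ν (2*(m+1)+1) x - pIter ν' (2*(m+1)+1) x| ≤ 2*D*x^(m+1)/m.factorial :=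
          (main m x hx).2
      _ = 2 * D * x^(m+1) / m.factorial := by ring


/-- Lemma 3.1: quantitative comparison of the iterated integrals built from two
measures in terms of the sup-distance of their distribution functions. -/
theorem stmt9 (ν ν' : Measure ℝ) [IsProbabilityMeasure ν] [IsProbabilityMeasure ν']
    [NullSingletonClass ν] [NullSingletonClass ν']
    (hsupp : ν (Set.Icc (0:ℝ) 1)ᶜ = 0) (hsupp' : ν' (Set.Icc (0:ℝ) 1)ᶜ = 0)
    (x : ℝ) (hx : x ∈ Set.Icc (0:ℝ) 1) (n : ℕ) (hn : 1 ≤ n) :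
    |qIter ν (2*n) x - qIter ν' (2*n) x|
        ≤ 2 * supDist (distF ν) (distF ν') * x^n / (n-1).factorial ∧
    |pIter ν (2*n) x - pIter ν' (2*n) x|
        ≤ 2 * supDist (distF ν) (distF ν') * x^n / (n-1).factorial ∧
    |qIter ν (2*n+1) x - qIter ν' (2*n+1) x|
        ≤ 2 * supDist (distF ν) (distF ν') * x^n / (n-1).factorial ∧
    |pIter ν (2*n+1) x - pIter ν' (2*n+1) x|
        ≤ 2 * supDist (distF ν) (distF ν') * x^n / (n-1).factorial :=
  stmt9' ν ν' x hx n hn
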